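/- arXiv:1808.07317 — 5 statements merged into one kernel-verified Lean document; each statement's English description precedes it below -/
import Mathlib

section
/- Let k be an algebraically closed field of characteristic p > 0, let L be a finite abelian group of order coprime to p, and let φ : L → L be the automorphism φ(x) = x^p (an automorphism since |L| is coprime to p). Then for every 2-cocycle α : L × L → k^× (trivial action), the 2-cocycle (x,y) ↦ α(φ⁻¹(x), φ⁻¹(y))^{p²} is cohomologous to α; that is, there exists a function c : L → k^× such that α(φ⁻¹(x), φ⁻¹(y))^{p²} = c(x) c(y) c(xy)⁻¹ α(x,y) for all x, y ∈ L. -/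
private structure MyCext (A L : Type*) (γ : L → L → A) where
  a : A
  x : L

private def myCextCommGroup {A L : Type*} [CommGroup A] [CommGroup L] (γ : L → L → A)
    (hγ : ∀ x y z, γ x y * γ (x * y) z = γ y z * γ x (y * z))
    (h1 : ∀ y, γ 1 y = 1) (h1' : ∀ x, γ x 1 = 1)
    (hs : ∀ x y, γ x y = γ y x) : CommGroup (MyCext A L γ) where
  mul e f := ⟨e.a * f.a * γ e.x f.x, e.x * f.x⟩
  one := ⟨1, 1⟩
  inv e := ⟨e.a⁻¹ * (γ e.x e.x⁻¹)⁻¹, e.x⁻¹⟩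
  mul_assoc e f g := by
    show MyCext.mk _ _ = MyCext.mk _ _
    have h := hγ e.x f.x g.x
    congr 1
    · calc e.a * f.a * γ e.x f.x * g.a * γ (e.x * f.x) g.x
          = e.a * f.a * g.a * (γ e.x f.x * γ (e.x * f.x) g.x) := by ac_rfl
        _ = e.a * f.a * g.a * (γ f.x g.x * γ e.x (f.x * g.x)) := by rw [h]
        _ = e.a * (f.a * g.a * γ f.x g.x) * γ e.x (f.x * g.x) := by ac_rfl
    · exact mul_assoc _ _ _
  one_mul e := by
    show MyCext.mk ((1 : A) * e.a * γ 1 e.x) (1 * e.x) = e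
    rw [h1, mul_one, one_mul, one_mul]
  mul_one e := by
    show MyCext.mk (e.a * 1 * γ e.x 1) (e.x * 1) = e
    rw [h1', mul_one, mul_one, mul_one]
  inv_mul_cancel e := by
    show MyCext.mk ((e.a⁻¹ * (γ e.x e.x⁻¹)⁻¹) * e.a * γ e.x⁻¹ e.x) (e.x⁻¹ * e.x) = MyCext.mk 1 1
    congr 1
    · rw [hs e.x⁻¹ e.x, mul_comm (e.a⁻¹) ((γ e.x e.x⁻¹)⁻¹)]
      group
    · exact inv_mul_cancel _
  mul_comm e f := by
    show MyCext.mk _ _ = MyCext.mk _ _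
    congr 1
    · rw [hs, mul_comm e.a]
    · exact mul_comm _ _

private theorem symm_cocycle_coboundary {A L : Type*} [CommGroup A] [CommGroup L]
    (hdiv : ∀ (n : ℕ), n ≠ 0 → ∀ a : A, ∃ b : A, b ^ n = a)
    (γ : L → L → A)
    (hγ : ∀ x y z, γ x y * γ (x * y) z = γ y z * γ x (y * z))
    (hs : ∀ x y, γ x y = γ y x) :
    ∃ c : L → A, ∀ x y, γ x y = c x * c y * (c (x * y))⁻¹ := by
  -- normalization
  have h11 : ∀ y, γ 1 y = γ 1 1 := by
    intro y
    have h := hγ 1 1 y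
    rw [one_mul, one_mul] at h
    exact (mul_right_cancel h).symm
  set δ : L → L → A := fun x y => γ x y * (γ 1 1)⁻¹ with hδdef
  have hδ : ∀ x y z, δ x y * δ (x * y) z = δ y z * δ x (y * z) := by
    intro x y z
    simp only [hδdef]
    calc γ x y * (γ 1 1)⁻¹ * (γ (x * y) z * (γ 1 1)⁻¹)
        = γ x y * γ (x * y) z * ((γ 1 1)⁻¹ * (γ 1 1)⁻¹) := by ac_rfl
      _ = γ y z * γ x (y * z) * ((γ 1 1)⁻¹ * (γ 1 1)⁻¹) := by rw [hγ]
      _ = γ y z * (γ 1 1)⁻¹ * (γ x (y * z) * (γ 1 1)⁻¹) := by ac_rfl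
  have hδ1 : ∀ y, δ 1 y = 1 := fun y => by
    simp only [hδdef, h11 y, mul_inv_cancel]
  have hδ1' : ∀ x, δ x 1 = 1 := fun x => by
    simp only [hδdef, hs x 1, h11 x, mul_inv_cancel]
  have hδs : ∀ x y, δ x y = δ y x := fun x y => by simp only [hδdef, hs x y]
  letI : CommGroup (MyCext A L δ) := myCextCommGroup δ hδ hδ1 hδ1' hδs
  -- divisibility
  letI : RootableBy A ℕ := rootableByOfPowLeftSurj A ℕ (fun {n} hn x => hdiv n hn x)
  letI : RootableBy A ℤ := Group.rootableByIntOfRootableByNat A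
  letI : DivisibleBy (Additive A) ℤ :=
    { div := fun a n => Additive.ofMul (RootableBy.root (Additive.toMul a) n)
      div_zero := fun a => by
        simp only [RootableBy.root_zero]; rfl
      div_cancel := fun {n} a hn => by
        show Additive.ofMul ((RootableBy.root (Additive.toMul a) n) ^ n) = a
        rw [RootableBy.root_cancel _ hn]; rfl }
  have hBaer : Module.Baer ℤ (Additive A) := Module.Baer.of_divisible _
  -- the embedding
  have hmul : ∀ (a b : A) (x y : L),
      (MyCext.mk a x : MyCext A L δ) * MyCext.mk b y = MyCext.mk (a * b * δ x y) (x * y) := by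
    intro a b x y; rfl
  let i : A →* MyCext A L δ :=
    { toFun := fun a => MyCext.mk a 1
      map_one' := rfl
      map_mul' := fun a b => by rw [hmul, hδ1', mul_one, mul_one] }
  have hi : Function.Injective i := fun a b h => congrArg MyCext.a h
  obtain ⟨r, hr⟩ := hBaer.extension_property_addMonoidHom (MonoidHom.toAdditive i) hi
    (AddMonoidHom.id (Additive A))
  set c : L → A := fun x => Additive.toMul (r (Additive.ofMul (MyCext.mk 1 x))) with hcdef
  have hre : ∀ a : A, Additive.toMul (r (Additive.ofMul (MyCext.mk a 1))) = a := by
    intro a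
    have := DFunLike.congr_fun hr (Additive.ofMul a)
    exact congrArg Additive.toMul this
  have hradd : ∀ e f : MyCext A L δ,
      Additive.toMul (r (Additive.ofMul (e * f)))
        = Additive.toMul (r (Additive.ofMul e)) * Additive.toMul (r (Additive.ofMul f)) := by
    intro e f
    have : Additive.ofMul (e * f) = Additive.ofMul e + Additive.ofMul f := rfl
    rw [this, map_add]; rfl
  have key : ∀ x y, δ x y = c x * c y * (c (x * y))⁻¹ := by
    intro x y
    have e1 : (MyCext.mk (1 : A) x : MyCext A L δ) * MyCext.mk 1 y
        = MyCext.mk (δ x y) 1 * MyCext.mk 1 (x * y) := by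
      rw [hmul, hmul, hδ1, one_mul, one_mul, mul_one, one_mul, mul_one]
    have := congrArg (fun e : MyCext A L δ => Additive.toMul (r (Additive.ofMul e))) e1
    simp only [hradd] at this
    rw [hre] at this
    rw [eq_mul_inv_iff_mul_eq]
    exact this.symm
  refine ⟨fun x => c x * γ 1 1, fun x y => ?_⟩
  show γ x y = c x * γ 1 1 * (c y * γ 1 1) * (c (x * y) * γ 1 1)⁻¹
  have : γ x y = δ x y * γ 1 1 := by
    simp only [hδdef, inv_mul_cancel_right]
  rw [this, key x y, mul_inv]
  simp [mul_comm, mul_left_comm, mul_assoc]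
section pairing
variable {A L : Type*} [CommGroup A] [CommGroup L] (α : L → L → A)
    (hα : ∀ x y z : L, α x y * α (x * y) z = α y z * α x (y * z))
include hα

private theorem pair_mul (x y z : L) :
    (α (x * y) z / α z (x * y)) = (α x z / α z x) * (α y z / α z y) := by
  rw [div_mul_div_comm, div_eq_div_iff_mul_eq_mul]
  refine mul_left_cancel (a := α x y) ?_
  have e1 := hα x y z
  have e2 := hα z x y
  have e3 := hα x z y
  calc α x y * (α (x * y) z * (α z x * α z y))
      = (α x y * α (x * y) z) * (α z x * α z y) := by ac_rfl
    _ = (α y z * α x (y * z)) * (α z x * α z y) := by rw [e1]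
    _ = (α x (y * z) * α z y) * (α y z * α z x) := by ac_rfl
    _ = (α x (z * y) * α z y) * (α y z * α z x) := by rw [mul_comm y z]
    _ = (α z y * α x (z * y)) * (α y z * α z x) := by ac_rfl
    _ = (α x z * α (x * z) y) * (α y z * α z x) := by rw [← e3]
    _ = (α z x * α (x * z) y) * (α x z * α y z) := by ac_rfl
    _ = (α z x * α (z * x) y) * (α x z * α y z) := by rw [mul_comm x z]
    _ = (α x y * α z (x * y)) * (α x z * α y z) := by rw [e2]
    _ = α x y * (α x z * α y z * α z (x * y)) := by ac_rfl

private theorem pair_one (z : L) : α 1 z / α z 1 = 1 := by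
  have h := pair_mul α hα 1 1 z
  rw [one_mul] at h
  have h2 : (α 1 z / α z 1) * 1 = (α 1 z / α z 1) * (α 1 z / α z 1) := by
    rw [mul_one]; exact h
  exact (mul_left_cancel h2).symm

private theorem pair_pow (n : ℕ) (x y : L) :
    α (x ^ n) y / α y (x ^ n) = (α x y / α y x) ^ n := by
  induction n with
  | zero => rw [pow_zero, pow_zero]; exact pair_one α hα y
  | succ n ih => rw [pow_succ, pow_succ, pair_mul α hα, ih]

omit hα in
private theorem pair_swap (x y : L) : α x y / α y x = (α y x / α x y)⁻¹ := by
  rw [inv_div]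

private theorem pair_pow_right (n : ℕ) (x y : L) :
    α x (y ^ n) / α (y ^ n) x = (α x y / α y x) ^ n := by
  rw [pair_swap α, pair_pow α hα, pair_swap α, inv_pow, inv_inv]
end pairing

/-- Let `k` be algebraically closed of characteristic `p > 0`, `L` a finite
abelian group of order coprime to `p`, and `φ : L ≃* L` the automorphism `x ↦ x^p`.
Then for every 2-cocycle `α : L × L → kˣ` (trivial action), the cocycle
`(x, y) ↦ α(φ⁻¹ x, φ⁻¹ y)^(p²)` is cohomologous to `α`. -/
theorem pth_power_twist_of_cocycle_is_cohomologous
    (p : ℕ) [Fact p.Prime] (k : Type*) [Field k] [IsAlgClosed k] [CharP k p]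
    (L : Type*) [CommGroup L] [Finite L] (hL : (Nat.card L).Coprime p)
    (φ : L ≃* L) (hφ : ∀ x : L, φ x = x ^ p)
    (α : L → L → kˣ)
    (hα : ∀ x y z : L, α x y * α (x * y) z = α y z * α x (y * z)) :
    ∃ c : L → kˣ, ∀ x y : L,
      (α (φ.symm x) (φ.symm y)) ^ (p ^ 2) = c x * c y * (c (x * y))⁻¹ * α x y := by
  -- divisibility of kˣ
  have hdiv : ∀ (n : ℕ), n ≠ 0 → ∀ a : kˣ, ∃ b : kˣ, b ^ n = a := by
    intro n hn a
    obtain ⟨z, hz⟩ := IsAlgClosed.exists_pow_nat_eq (a : k) (Nat.pos_of_ne_zero hn)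
    have hz0 : z ≠ 0 := by
      rintro rfl
      rw [zero_pow hn] at hz
      exact a.ne_zero hz.symm
    exact ⟨Units.mk0 z hz0, Units.ext (by push_cast; exact hz)⟩
  set ψ : L → L := fun x => φ.symm x with hψ
  have hψp : ∀ x : L, (ψ x) ^ p = x := by
    intro x
    rw [← hφ (ψ x)]
    exact φ.apply_symm_apply x
  set B : L → L → kˣ := fun x y => α (ψ x) (ψ y) ^ (p ^ 2) with hB
  -- B is a cocycle
  have hψmul : ∀ x y : L, ψ (x * y) = ψ x * ψ y := fun x y => map_mul φ.symm x y
  have hBc : ∀ x y z : L, B x y * B (x * y) z = B y z * B x (y * z) := by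
    intro x y z
    simp only [hB, hψmul, ← mul_pow, hα (ψ x) (ψ y) (ψ z)]
  -- the quotient cocycle
  set γ : L → L → kˣ := fun x y => B x y / α x y with hγ
  have hγc : ∀ x y z : L, γ x y * γ (x * y) z = γ y z * γ x (y * z) := by
    intro x y z
    simp only [hγ, div_mul_div_comm, hBc x y z, hα x y z]
  -- symmetry of γ via the pairing
  have hγs : ∀ x y : L, γ x y = γ y x := by
    intro x y
    simp only [hγ]
    rw [div_eq_div_iff_mul_eq_mul]
    have key : B x y / B y x = α x y / α y x := by
      have h1 : B x y / B y x = (α (ψ x) (ψ y) / α (ψ y) (ψ x)) ^ (p ^ 2) := by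
        rw [hB]; rw [div_pow]
      rw [h1, pow_two, pow_mul, ← pair_pow α hα p (ψ x) (ψ y), hψp x,
        ← pair_pow_right α hα p x (ψ y), hψp y]
    rw [div_eq_div_iff_mul_eq_mul] at key
    rw [key, mul_comm]
  obtain ⟨c, hc⟩ := symm_cocycle_coboundary hdiv γ hγc hγs
  refine ⟨c, fun x y => ?_⟩
  have := hc x y
  rw [hγ] at this
  rw [div_eq_iff_eq_mul] at this
  exact this
end

section
/- Let H be a finite group with [H,H] ⊆ Z(H) (nilpotent of class at most 2), set Z = [H,H], and let χ be a faithful linear character of Z, i.e. an injective group homomorphism Z → ℂ^×. Let τ be an irreducible complex character of H lying over χ, i.e. the restriction of τ to Z equals τ(1)·χ. Then τ(x) = 0 for every x ∈ H ∖ Z(H), and τ(1)² = |H : Z(H)|. -/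
/-!
By Schur's lemma every central element of `H` acts on the irreducible representation by a
scalar; on `[H,H]` that scalar is `χ`, which is faithful. If `x` is not central, pick `g` with
`⁅g, x⁆ ≠ 1`; then `g x g⁻¹ = ⁅g, x⁆ x`, so `τ x = χ ⁅g, x⁆ · τ x` with `χ ⁅g, x⁆ ≠ 1`, forcing
`τ x = 0`. The norm `|H|⁻¹ ∑ τ(g) τ(g⁻¹)` of an irreducible character is `1`, and only the
central terms survive, each equal to `τ(1)²`; hence `|Z(H)| τ(1)² = |H|`.
-/

open Module
open scoped commutatorElement

namespace Representation

section Monoid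

variable {k G V : Type*} [Field k] [Monoid G] [AddCommGroup V] [Module k V]

theorem isIrreducible_of_forall_invariant [Nontrivial V] (ρ : Representation k G V)
    (h : ∀ U : Submodule k V, (∀ g : G, ∀ v ∈ U, ρ g v ∈ U) → U = ⊥ ∨ U = ⊤) :
    ρ.IsIrreducible where
  exists_pair_ne := ⟨⊥, ⊤, fun h => bot_ne_top (congrArg Subrepresentation.toSubmodule h)⟩
  eq_bot_or_eq_top σ := by
    rcases h σ.toSubmodule fun g v hv => σ.apply_mem_toSubmodule g hv with h | h
    · exact Or.inl (Subrepresentation.toSubmodule_injective h)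
    · exact Or.inr (Subrepresentation.toSubmodule_injective h)

end Monoid

variable {k G V : Type*} [Field k] [Group G] [AddCommGroup V] [Module k V]
  (ρ : Representation k G V)

theorem exists_eq_smul_one_of_mem_center [IsAlgClosed k] [FiniteDimensional k V]
    [ρ.IsIrreducible] {z : G} (hz : z ∈ Subgroup.center G) : ∃ c : k, ρ z = c • 1 := by
  let f : IntertwiningMap ρ ρ := (ρ z).intertwiningMap_of_isIntertwiningMap ρ ρ fun g v => by
    rw [← Module.End.mul_apply, ← map_mul, ← (Subgroup.mem_center_iff.mp hz g), map_mul,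
      Module.End.mul_apply]
  obtain ⟨c, hc⟩ := IsIrreducible.algebraMap_intertwiningMap_bijective_of_isAlgClosed.2 f
  exact ⟨c, congrArg IntertwiningMap.toLinearMap hc.symm⟩

theorem character_mul_of_eq_smul_one {z : G} {c : k} (hz : ρ z = c • 1) (x : G) :
    ρ.character (z * x) = c * ρ.character x := by
  rw [character, map_mul, hz, smul_mul_assoc, one_mul, map_smul, smul_eq_mul, character]

theorem character_eq_zero_of_conj_eq_mul {g x z : G} {c : k} (hz : ρ z = c • 1) (hc : c ≠ 1)
    (hconj : g * x * g⁻¹ = z * x) : ρ.character x = 0 := by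
  have h : ρ.character x = c * ρ.character x := by
    rw [← character_mul_of_eq_smul_one ρ hz, ← hconj, char_conj]
  by_contra hx
  exact hc (mul_right_cancel₀ hx (h.symm.trans (one_mul _).symm))

theorem character_mul_character_inv_of_eq_smul_one {z : G} {c : k} (hz : ρ z = c • 1) :
    ρ.character z * ρ.character z⁻¹ = ρ.character 1 ^ 2 := by
  have h₁ := character_mul_of_eq_smul_one ρ hz 1
  have h₂ := character_mul_of_eq_smul_one ρ hz z⁻¹
  rw [mul_one] at h₁
  rw [mul_inv_cancel] at h₂
  rw [h₁, h₂]
  ring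

variable [IsAlgClosed k] [FiniteDimensional k V] [ρ.IsIrreducible]

theorem character_eq_zero_of_notMem_center (hGZ : commutator G ≤ Subgroup.center G)
    (hfaithful : ∀ z ∈ commutator G, ρ z = 1 → z = 1) {x : G}
    (hx : x ∉ Subgroup.center G) : ρ.character x = 0 := by
  obtain ⟨g, hg⟩ : ∃ g : G, ⁅g, x⁆ ≠ 1 := by
    by_contra! h
    exact hx (Subgroup.mem_center_iff.mpr fun g => commutatorElement_eq_one_iff_mul_comm.mp (h g))
  have hmem : ⁅g, x⁆ ∈ commutator G :=
    Subgroup.commutator_mem_commutator (Subgroup.mem_top g) (Subgroup.mem_top x)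
  obtain ⟨c, hc⟩ := ρ.exists_eq_smul_one_of_mem_center (hGZ hmem)
  refine ρ.character_eq_zero_of_conj_eq_mul (g := g) hc ?_ (by group)
  rintro rfl
  exact hg (hfaithful _ hmem (by rw [hc, one_smul]))

theorem finrank_sq_eq_index_center [Fintype G] [CharZero k]
    (hvanish : ∀ x ∉ Subgroup.center G, ρ.character x = 0) :
    (finrank k V : k) ^ 2 = (Subgroup.center G).index := by
  classical
  have : Invertible (Nat.card G : k) := invertibleOfNonzero (Nat.cast_ne_zero.2 Nat.card_pos.ne')
  have hsum : ∑ g : G, ρ.character g * ρ.character g⁻¹ =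
      Nat.card (Subgroup.center G) * (finrank k V : k) ^ 2 := by
    have hterm (g : G) : ρ.character g * ρ.character g⁻¹ =
        if g ∈ Subgroup.center G then (finrank k V : k) ^ 2 else 0 := by
      split_ifs with hg
      · obtain ⟨c, hc⟩ := ρ.exists_eq_smul_one_of_mem_center hg
        rw [character_mul_character_inv_of_eq_smul_one ρ hc, char_one]
      · rw [hvanish g hg, zero_mul]
    rw [Finset.sum_congr rfl fun g _ => hterm g, ← Finset.sum_filter, Finset.sum_const,
      nsmul_eq_mul, Nat.card_eq_fintype_card, Fintype.card_subtype]
  have horth := card_inv_mul_sum_char_mul_char_eq_finrank ρ ρ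
  rw [IsIrreducible.finrank_intertwiningMap_self, hsum, ← (Subgroup.center G).index_mul_card,
    Nat.cast_mul] at horth
  have hI : ((Subgroup.center G).index : k) ≠ 0 :=
    Nat.cast_ne_zero.2 Subgroup.index_ne_zero_of_finite
  field_simp at horth
  simpa using horth

end Representation

/-- Let `H` be a finite group with `[H,H] ⊆ Z(H)`, `Z = [H,H]`, and let
`χ` be a faithful linear character of `Z`. If `τ` is the character of an irreducible
complex representation `ρ` of `H` lying over `χ` (i.e. `τ(z) = τ(1)·χ(z)` for `z ∈ Z`),
then `τ(x) = 0` for every `x ∈ H ∖ Z(H)`, and `τ(1)² = |H : Z(H)|`. -/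
theorem character_vanishes_off_center_and_degree_squared
    (H : Type*) [Group H] [Fintype H]
    (hHZ : commutator H ≤ Subgroup.center H)
    (χ : ↥(commutator H) →* ℂˣ) (hχ : Function.Injective χ)
    (W : Type*) [AddCommGroup W] [Module ℂ W] [FiniteDimensional ℂ W] [Nontrivial W]
    (ρ : Representation ℂ H W)
    (hirr : ∀ U : Submodule ℂ W, (∀ g : H, ∀ w ∈ U, ρ g w ∈ U) → U = ⊥ ∨ U = ⊤)
    (hover : ∀ (z : H) (hz : z ∈ commutator H),
      LinearMap.trace ℂ W (ρ z) = LinearMap.trace ℂ W (ρ 1) * (χ ⟨z, hz⟩ : ℂ)) :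
    (∀ x : H, x ∉ Subgroup.center H → LinearMap.trace ℂ W (ρ x) = 0) ∧
    (LinearMap.trace ℂ W (ρ 1)) ^ 2 = ((Subgroup.center H).index : ℂ) := by
  have := ρ.isIrreducible_of_forall_invariant hirr
  have hdeg : LinearMap.trace ℂ W (ρ 1) = finrank ℂ W := ρ.char_one
  have hfaithful : ∀ z ∈ commutator H, ρ z = 1 → z = 1 := by
    intro z hz hρz
    have hχz : χ ⟨z, hz⟩ = 1 := Units.ext <| mul_left_cancel₀
      (hdeg ▸ Nat.cast_ne_zero.2 finrank_pos.ne')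
      (by rw [← hover, hρz, ← map_one ρ, Units.val_one, mul_one])
    exact congrArg Subtype.val (hχ (hχz.trans (map_one χ).symm))
  have hvanish (x : H) (hx : x ∉ Subgroup.center H) : ρ.character x = 0 :=
    ρ.character_eq_zero_of_notMem_center hHZ hfaithful hx
  exact ⟨hvanish, hdeg ▸ ρ.finrank_sq_eq_index_center hvanish⟩
end

section
/- Let H be a finite group with [H,H] ⊆ Z(H), set Z = [H,H], let χ be a faithful linear character of Z, and for each linear character φ of Z(H) with φ|_Z = χ let τ_φ be the unique irreducible constituent of φ↑^H. Let η be a linear character of H that is trivial on Z. Then τ_{(η|_{Z(H)})·φ} = η·τ_φ (pointwise product of characters). Consequently η·τ_φ = τ_φ if and only if the restriction of η to Z(H) is the trivial character. -/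
open scoped Classical

/-- The character of `H` induced from a linear character `φ` of the center `Z(H)`:
`φ↑^H(g) = |Z(H)|⁻¹ Σ_{x ∈ H, x⁻¹gx ∈ Z(H)} φ(x⁻¹gx)`. -/
noncomputable def inducedFromCenter (H : Type*) [Group H] [Fintype H]
    (φ : ↥(Subgroup.center H) →* ℂˣ) (g : H) : ℂ :=
  (Nat.card ↥(Subgroup.center H) : ℂ)⁻¹ *
    ∑ x : H, if h : x⁻¹ * g * x ∈ Subgroup.center H then (φ ⟨x⁻¹ * g * x, h⟩ : ℂ) else 0

/-- `τ : H → ℂ` is the character of an irreducible complex representation of `H`. -/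
def IsIrreducibleCharacter (H : Type*) [Group H] (τ : H → ℂ) : Prop :=
  ∃ (n : ℕ) (ρ : Representation ℂ H (Fin n → ℂ)),
    0 < n ∧
    (∀ U : Submodule ℂ (Fin n → ℂ), (∀ g : H, ∀ w ∈ U, ρ g w ∈ U) → U = ⊥ ∨ U = ⊤) ∧
    ∀ g : H, τ g = LinearMap.trace ℂ (Fin n → ℂ) (ρ g)

/-- Let `H` be a finite group with `[H,H] ⊆ Z(H)`, `Z = [H,H]`, `χ` a
faithful linear character of `Z`, `φ` a linear character of `Z(H)` with `φ|_Z = χ`, and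
`τ = τ_φ` the unique irreducible constituent of `φ↑^H` (so `φ↑^H = τ(1)·τ`). Let `η` be a
linear character of `H` trivial on `Z`. Then `η·τ` is the unique irreducible constituent
of `((η|_{Z(H)})·φ)↑^H`, i.e. `τ_{(η|_{Z(H)})·φ} = η·τ_φ`; consequently `η·τ_φ = τ_φ` if
and only if `η` restricts to the trivial character of `Z(H)`. -/
theorem linear_twist_of_irreducible_constituent
    (H : Type*) [Group H] [Fintype H]
    (hHZ : commutator H ≤ Subgroup.center H)
    (χ : ↥(commutator H) →* ℂˣ) (hχ : Function.Injective χ)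
    (φ : ↥(Subgroup.center H) →* ℂˣ)
    (hres : ∀ (z : H) (hz : z ∈ commutator H), φ ⟨z, hHZ hz⟩ = χ ⟨z, hz⟩)
    (τ : H → ℂ) (hτ : IsIrreducibleCharacter H τ)
    (hτφ : ∀ g : H, inducedFromCenter H φ g = τ 1 * τ g)
    (η : H →* ℂˣ) (hη : ∀ (z : H), z ∈ commutator H → η z = 1) :
    (IsIrreducibleCharacter H (fun g => (η g : ℂ) * τ g) ∧
      ∀ g : H, inducedFromCenter H ((η.comp (Subgroup.center H).subtype) * φ) g =
        ((η (1 : H) : ℂ) * τ 1) * ((η g : ℂ) * τ g)) ∧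
    ((fun g => (η g : ℂ) * τ g) = τ ↔ ∀ h ∈ Subgroup.center H, η h = 1) := by
  obtain ⟨n, ρ, hn, hirr, htr⟩ := hτ
  -- τ 1 ≠ 0
  have hτ1 : τ 1 = (n : ℂ) := by
    rw [htr 1, map_one, LinearMap.trace_one, Module.finrank_fin_fun]
  have hτ1ne : τ 1 ≠ 0 := by
    rw [hτ1]
    exact_mod_cast hn.ne'
  -- τ vanishes off the center
  have hoff : ∀ g : H, g ∉ Subgroup.center H → τ g = 0 := by
    intro g hg
    have h0 : inducedFromCenter H φ g = 0 := by
      unfold inducedFromCenter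
      rw [Finset.sum_eq_zero, mul_zero]
      intro x _
      rw [dif_neg]
      intro hmem
      apply hg
      have h1 := Subgroup.mem_center_iff.mp hmem x
      have h2 : g * x = (x⁻¹ * g * x) * x := by
        rw [← h1]; group
      have h3 : g = x⁻¹ * g * x := mul_right_cancel h2
      rw [h3]; exact hmem
    have := hτφ g
    rw [h0] at this
    rcases mul_eq_zero.mp this.symm with h | h
    · exact absurd h hτ1ne
    · exact h
  -- value of the induced character at a central element
  have hcen : ∀ (g : H) (hg : g ∈ Subgroup.center H),
      inducedFromCenter H φ g =
        (Nat.card ↥(Subgroup.center H) : ℂ)⁻¹ * (Fintype.card H * (φ ⟨g, hg⟩ : ℂ)) := by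
    intro g hg
    unfold inducedFromCenter
    congr 1
    have hsum : ∀ x : H,
        (if h : x⁻¹ * g * x ∈ Subgroup.center H then (φ ⟨x⁻¹ * g * x, h⟩ : ℂ) else 0)
          = (φ ⟨g, hg⟩ : ℂ) := by
      intro x
      have hx : x⁻¹ * g * x = g := by
        have := (Subgroup.mem_center_iff.mp hg x⁻¹)
        rw [this]; group
      simp only [hx, dif_pos hg]
    rw [Finset.sum_congr rfl (fun x _ => hsum x), Finset.sum_const, Finset.card_univ,
      nsmul_eq_mul]
  -- τ is nonzero on the center
  have hτcen : ∀ (g : H), g ∈ Subgroup.center H → τ g ≠ 0 := by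
    intro g hg h0
    have hne : inducedFromCenter H φ g ≠ 0 := by
      rw [hcen g hg]
      refine mul_ne_zero (inv_ne_zero ?_) (mul_ne_zero ?_ (Units.ne_zero _))
      · exact_mod_cast Nat.card_pos.ne'
      · exact_mod_cast Fintype.card_ne_zero
    rw [hτφ g, h0, mul_zero] at hne
    exact hne rfl
  refine ⟨⟨?_, ?_⟩, ?_⟩
  · -- η·τ is irreducible
    refine ⟨n, ⟨⟨fun g => (η g : ℂ) • ρ g, ?_⟩, ?_⟩, hn, ?_, ?_⟩
    · simp
    · intro g h
      dsimp only
      rw [map_mul, map_mul, Units.val_mul, mul_smul, smul_mul_assoc, mul_smul_comm]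
    · intro U hU
      refine hirr U (fun g w hw => ?_)
      have h1 := hU g w hw
      have h2 := U.smul_mem ((η g : ℂ)⁻¹) h1
      simpa [smul_smul, inv_mul_cancel₀ (Units.ne_zero (η g))] using h2
    · intro g
      simp only [MonoidHom.coe_mk, OneHom.coe_mk, map_smul, smul_eq_mul, htr g]
  · -- induced character of the twisted linear character
    intro g
    have key : inducedFromCenter H ((η.comp (Subgroup.center H).subtype) * φ) g
        = (η g : ℂ) * inducedFromCenter H φ g := by
      unfold inducedFromCenter
      rw [show ∀ c S : ℂ, (η g : ℂ) * (c * S) = c * ((η g : ℂ) * S) from fun c S => by ring]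
      congr 1
      rw [Finset.mul_sum]
      refine Finset.sum_congr rfl (fun x _ => ?_)
      by_cases hx : x⁻¹ * g * x ∈ Subgroup.center H
      · rw [dif_pos hx, dif_pos hx]
        have : η (x⁻¹ * g * x) = η g := by
          rw [map_mul, map_mul, map_inv, mul_right_comm, inv_mul_cancel, one_mul]
        simp [this]
      · rw [dif_neg hx, dif_neg hx, mul_zero]
    rw [key, hτφ g, map_one]
    push_cast
    ring
  · -- η·τ = τ ↔ η trivial on the center
    constructor
    · intro heq h hh
      have := congrFun heq h
      have hτh := hτcen h hh
      have : ((η h : ℂ) - 1) * τ h = 0 := by rw [sub_mul, this, one_mul, sub_self]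
      rcases mul_eq_zero.mp this with h1 | h1
      · have : (η h : ℂ) = 1 := by linear_combination h1
        exact Units.ext (by simpa using this)
      · exact absurd h1 hτh
    · intro htriv
      funext g
      by_cases hg : g ∈ Subgroup.center H
      · have := htriv g hg
        rw [this]
        simp
      · rw [hoff g hg, mul_zero]
end

section
/- Let 1 → A → B → C → 1 be a short exact sequence of abelian groups (written multiplicatively) and let π : D → A be a surjective homomorphism of abelian groups. For each α ∈ C choose a preimage u_α ∈ B under the surjection B → C. Then there exists a map f : C × C → D which is a symmetric 2-cocycle, i.e. f(α,β) = f(β,α) and f(α,β)·f(αβ,γ) = f(β,γ)·f(α,βγ) for all α, β, γ ∈ C, and which satisfies π(f(α,β)) = u_α⁻¹ u_β⁻¹ u_{αβ} for all α, β ∈ C (note that u_α⁻¹ u_β⁻¹ u_{αβ} lies in the image of A in B). -/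
/-!
The obstruction to lifting the extension class of `B` along `π : D → A` lies in
`Ext²(C, ker π)`, which vanishes over `ℤ`. Concretely: embed `D` into a divisible group `I` and
put `Q := I / ker π`. The induced map `A → Q` extends to `B` because `Q` is divisible, so the
`A`-valued cocycle `δu` becomes the coboundary of a map `C → Q`. Lifting that map to
`m : C → I`, the coboundary `δm` is a symmetric cocycle whose values lie in `D` and map to `δu`.
-/

open Function

universe u

section Coboundary

variable {C M N : Type*} [AddCommGroup C] [AddCommGroup M] [AddCommGroup N]

def coboundary (m : C → M) (a b : C) : M := -m a + -m b + m (a + b)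

theorem coboundary_comm (m : C → M) (a b : C) : coboundary m a b = coboundary m b a := by
  simp only [coboundary, add_comm a b]
  abel

theorem coboundary_add_coboundary (m : C → M) (a b c : C) :
    coboundary m a b + coboundary m (a + b) c = coboundary m b c + coboundary m a (b + c) := by
  simp only [coboundary, add_assoc a b c]
  abel

theorem AddMonoidHom.map_coboundary (φ : M →+ N) (m : C → M) (a b : C) :
    φ (coboundary m a b) = coboundary (φ ∘ m) a b := by
  simp [coboundary]

end Coboundary

theorem exists_injective_addMonoidHom_to_divisible (D : Type u) [AddCommGroup D] :
    ∃ (I : Type u) (_ : AddCommGroup I) (_ : DivisibleBy I ℤ) (j : D →+ I), Injective j := by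
  refine ⟨CharacterModule D → AddCircle (1 : ℚ), inferInstance, inferInstance,
    AddMonoidHom.mk' (fun d χ => χ d) (fun d d' => funext fun χ => map_add χ d d'), ?_⟩
  rw [injective_iff_map_eq_zero]
  exact fun d hd => CharacterModule.eq_zero_of_character_apply fun χ => congrFun hd χ

theorem AddMonoidHom.exists_comp_eq_of_ker_le {D B Q : Type*} [AddCommGroup D] [AddCommGroup B]
    [AddCommGroup Q] [DivisibleBy Q ℤ] (φ : D →+ B) (χ : D →+ Q) (h : φ.ker ≤ χ.ker) :
    ∃ Ψ : B →+ Q, Ψ.comp φ = χ := by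
  let ψ : φ.range →+ Q := φ.rangeRestrict.liftOfRightInverse
    (surjInv φ.rangeRestrict_surjective) (rightInverse_surjInv _)
    ⟨χ, by rwa [φ.ker_rangeRestrict]⟩
  obtain ⟨Ψ, hΨ⟩ := (Module.Baer.of_divisible Q).extension_property_addMonoidHom
    φ.range.subtype φ.range.subtype_injective ψ
  refine ⟨Ψ, AddMonoidHom.ext fun d => ?_⟩
  exact (DFunLike.congr_fun hΨ (φ.rangeRestrict d)).trans
    (φ.rangeRestrict.liftOfRightInverse_comp_apply _ _ _ d)

theorem exists_preimage_of_mk_eq {D B I : Type*} [AddCommGroup D] [AddCommGroup B]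
    [AddCommGroup I] (j : D →+ I) (φ : D →+ B) {x : I} {d : D}
    (h : (x : I ⧸ φ.ker.map j) = j d) : ∃ d', j d' = x ∧ φ d' = φ d := by
  obtain ⟨_, ⟨k, hk, rfl⟩, hx⟩ := (QuotientAddGroup.mk'_eq_mk' _).mp h.symm
  exact ⟨d + k, by rw [map_add, hx], by rw [map_add, φ.mem_ker.mp hk, add_zero]⟩

theorem exists_symmetric_addCocycle_comp_eq_coboundary {C B D : Type*} [AddCommGroup C]
    [AddCommGroup B] [AddCommGroup D] (φ : D →+ B) (u : C → B)
    (hu : ∀ a b, coboundary u a b ∈ φ.range) :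
    ∃ f : C → C → D,
      (∀ a b, f a b = f b a) ∧
      (∀ a b c, f a b + f (a + b) c = f b c + f a (b + c)) ∧
      (∀ a b, φ (f a b) = coboundary u a b) := by
  obtain ⟨I, _, _, j, hj⟩ := exists_injective_addMonoidHom_to_divisible D
  let mk := QuotientAddGroup.mk' (φ.ker.map j)
  have := (QuotientAddGroup.mk'_surjective _).divisibleBy mk fun x n => map_zsmul mk n x
  obtain ⟨Ψ, hΨ⟩ := φ.exists_comp_eq_of_ker_le (mk.comp j)
    fun d hd => (QuotientAddGroup.eq_zero_iff _).mpr ⟨d, hd, rfl⟩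
  choose m hm using fun c => QuotientAddGroup.mk'_surjective (φ.ker.map j) (Ψ (u c))
  have hδm : ∀ a b, ∃ d, j d = coboundary m a b ∧ φ d = coboundary u a b := by
    intro a b
    obtain ⟨d, hd⟩ := hu a b
    rw [← hd]
    refine exists_preimage_of_mk_eq j φ ?_
    change mk (coboundary m a b) = (mk.comp j) d
    rw [mk.map_coboundary, show mk ∘ m = Ψ ∘ u from funext hm, ← Ψ.map_coboundary, ← hd,
      ← hΨ]
    rfl
  choose f hfj hfφ using hδm
  refine ⟨f, fun a b => hj ?_, fun a b c => hj ?_, hfφ⟩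
  · rw [hfj, hfj, coboundary_comm]
  · simp only [map_add, hfj]
    exact coboundary_add_coboundary m a b c

theorem exists_symmetric_cocycle_lift_general
    (A B C D : Type*) [CommGroup A] [CommGroup B] [CommGroup C] [CommGroup D]
    (i : A →* B) (q : B →* C)
    (hexact : i.range = q.ker)
    (π : D →* A) (hπ : Function.Surjective π)
    (u : C → B) (hu : ∀ c : C, q (u c) = c) :
    ∃ f : C → C → D,
      (∀ a b : C, f a b = f b a) ∧
      (∀ a b c : C, f a b * f (a * b) c = f b c * f a (b * c)) ∧
      (∀ a b : C, i (π (f a b)) = (u a)⁻¹ * (u b)⁻¹ * u (a * b)) := by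
  have hlift : ∀ a b : C, ∃ d, i (π d) = (u a)⁻¹ * (u b)⁻¹ * u (a * b) := by
    intro a b
    obtain ⟨x, hx⟩ : (u a)⁻¹ * (u b)⁻¹ * u (a * b) ∈ i.range := by
      rw [hexact, MonoidHom.mem_ker]
      simp only [map_mul, map_inv, hu]
      rw [← mul_inv, inv_mul_cancel]
    obtain ⟨d, rfl⟩ := hπ x
    exact ⟨d, hx⟩
  obtain ⟨f, hsymm, hcocycle, hf⟩ := exists_symmetric_addCocycle_comp_eq_coboundary
    (MonoidHom.toAdditive (i.comp π)) (Additive.ofMul ∘ u ∘ Additive.toMul) hlift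
  exact ⟨fun a b => (f (.ofMul a) (.ofMul b)).toMul,
    fun a b => congrArg Additive.toMul (hsymm _ _),
    fun a b c => congrArg Additive.toMul (hcocycle _ _ _),
    fun a b => congrArg Additive.toMul (hf _ _)⟩

/-- Let `1 → A → B → C → 1` be a short exact sequence of abelian groups
(with inclusion `i : A →* B` and projection `q : B →* C`), let `π : D → A` be a surjective
homomorphism of abelian groups, and for each `α ∈ C` let `u α ∈ B` be a chosen preimage
under `q`. Then there is a symmetric 2-cocycle `f : C × C → D` with
`π(f(α,β)) = u_α⁻¹ u_β⁻¹ u_{αβ}` for all `α, β ∈ C`. -/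
theorem exists_symmetric_cocycle_lift
    (A B C D : Type*) [CommGroup A] [CommGroup B] [CommGroup C] [CommGroup D]
    (i : A →* B) (q : B →* C)
    (hi : Function.Injective i) (hq : Function.Surjective q)
    (hexact : i.range = q.ker)
    (π : D →* A) (hπ : Function.Surjective π)
    (u : C → B) (hu : ∀ c : C, q (u c) = c) :
    ∃ f : C → C → D,
      (∀ a b : C, f a b = f b a) ∧
      (∀ a b c : C, f a b * f (a * b) c = f b c * f a (b * c)) ∧
      (∀ a b : C, i (π (f a b)) = (u a)⁻¹ * (u b)⁻¹ * u (a * b)) :=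
  exists_symmetric_cocycle_lift_general A B C D i q hexact π hπ u hu
end

section
/- Let G be a finite group, k an algebraically closed field of characteristic p > 0, and α : G × G → k^× a 2-cocycle (trivial action) whose cohomology class in H²(G, k^×) has order m. Then there exist a finite group G̃, a surjective homomorphism ρ : G̃ → G whose kernel Z is a central cyclic subgroup of G̃ of order m contained in the commutator subgroup [G̃, G̃], and an injective group homomorphism χ : Z → k^×, such that the twisted group algebra k_α G is isomorphic as a k-algebra to k G̃ e, where e = |Z|⁻¹ Σ_{z ∈ Z} χ(z⁻¹) z is a central idempotent of the group algebra k G̃ (note m is coprime to p since k^× has no p-torsion, so |Z| is invertible in k). -/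
/-!
Taking `m`-th roots (`k` is algebraically closed) of a function whose coboundary is `α ^ m`
gives `d : G → kˣ` such that `β = α / δd` is a normalized cocycle with values in the group
`μ_m` of `m`-th roots of unity; `m` is prime to `p` because `kˣ` has no `p`-torsion. Let `G̃`
be the central extension of `G` by `μ_m` defined by `β`, with section `g ↦ ĝ`, so that
`ĝ ĥ = β(g, h) (gh)^`. The idempotent `e` of `k G̃` attached to the inclusion `χ : μ_m → kˣ`
satisfies `e z = χ(z) e` for `z ∈ μ_m`, hence `u_g ↦ d(g) e ĝ` is multiplicative, and it is
a bijection onto `e k G̃` with inverse induced by `(g, t) ↦ t d(g)⁻¹ u_g`.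

A character `Φ` of `G̃` restricts to `t ↦ t ^ j` on `μ_m`, and `g ↦ Φ(ĝ)` exhibits `β ^ j` as a
coboundary, so `m ∣ j` and `Φ` is trivial on `μ_m`. Characters of the finite abelian group
`G̃ / [G̃, G̃]` separate its elements of order prime to `p`, so `μ_m ≤ [G̃, G̃]`.
-/

/-- A 2-cocycle on `G` with values in the trivial module `M`. -/
def IsMulTwoCocycle {G M : Type*} [Group G] [CommGroup M] (α : G → G → M) : Prop :=
  ∀ x y z : G, α x y * α (x * y) z = α y z * α x (y * z)

/-- A 2-coboundary on `G` with values in the trivial module `M`. -/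
def IsMulTwoCoboundary {G M : Type*} [Group G] [CommGroup M] (α : G → G → M) : Prop :=
  ∃ c : G → M, ∀ x y : G, α x y = c x * c y * (c (x * y))⁻¹

/-- The data asserted to exist in Statement 14: a finite central extension
`1 → Z → G̃ → G → 1` with `Z` cyclic of order `m`, central and contained in `[G̃, G̃]`, a
faithful linear character `χ` of `Z`, the central idempotent
`e = |Z|⁻¹ Σ_{z ∈ Z} χ(z⁻¹) z` of `k G̃`, and an isomorphism of `k`-algebras from the
twisted group algebra `A = k_α G` onto `k G̃ e`. -/
structure KulshammerData (k : Type*) [Field k] (G : Type*) [Group G] [Finite G]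
    (m : ℕ) (A : Type*) [Ring A] [Algebra k A] where
  Gt : Type*
  [grp : Group Gt]
  [fin : Finite Gt]
  ρ : Gt →* G
  surj : Function.Surjective ρ
  central : ρ.ker ≤ Subgroup.center Gt
  cyclic : IsCyclic ρ.ker
  card_ker : Nat.card ρ.ker = m
  ker_le_commutator : ρ.ker ≤ commutator Gt
  χ : ↥ρ.ker →* kˣ
  χ_inj : Function.Injective χ
  e : MonoidAlgebra k Gt
  he : e = (Nat.card ρ.ker : k)⁻¹ •
    ∑ᶠ z : ↥ρ.ker, ((χ z⁻¹ : kˣ) : k) • (MonoidAlgebra.of k Gt (z : Gt))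
  he_idem : e * e = e
  he_central : ∀ x : MonoidAlgebra k Gt, e * x = x * e
  iso : ∃ f : A →ₗ[k] MonoidAlgebra k Gt,
    Function.Injective f ∧ (∀ a b : A, f (a * b) = f a * f b) ∧ f 1 = e ∧
    Set.range f = {x : MonoidAlgebra k Gt | e * x = x}

section Cohomology

variable {G M : Type*} [Group G] [CommGroup M]

theorem IsMulTwoCocycle.apply_one_left {α : G → G → M} (hα : IsMulTwoCocycle α) (g : G) :
    α 1 g = α 1 1 := by
  simpa using (hα 1 1 g).symm

theorem IsMulTwoCocycle.apply_one_right {α : G → G → M} (hα : IsMulTwoCocycle α) (g : G) :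
    α g 1 = α 1 1 := by
  simpa using hα g 1 1

variable (G M) in
def mulTwoCocycles : Subgroup (G → G → M) where
  carrier := {α | IsMulTwoCocycle α}
  mul_mem' {α β} hα hβ x y z := by
    simp only [Pi.mul_apply]
    rw [mul_mul_mul_comm, hα, hβ, mul_mul_mul_comm]
  one_mem' _ _ _ := rfl
  inv_mem' {α} hα x y z := by
    simp only [Pi.inv_apply]
    rw [← mul_inv, hα, mul_inv]

def mulTwoCoboundaryHom : (G → M) →* (G → G → M) where
  toFun d x y := d x * d y * (d (x * y))⁻¹
  map_one' := by ext; simp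
  map_mul' d e := by
    ext x y
    simp only [Pi.mul_apply, mul_inv]
    ac_rfl

theorem isMulTwoCoboundary_iff_mem_range {α : G → G → M} :
    IsMulTwoCoboundary α ↔ α ∈ (mulTwoCoboundaryHom : (G → M) →* _).range := by
  simp only [IsMulTwoCoboundary, MonoidHom.mem_range, funext_iff, eq_comm (a := α _ _)]
  rfl

theorem mulTwoCoboundaryHom_range_le :
    (mulTwoCoboundaryHom : (G → M) →* _).range ≤ mulTwoCocycles G M := by
  rintro _ ⟨d, rfl⟩ x y z
  simp only [mulTwoCoboundaryHom, MonoidHom.coe_mk, OneHom.coe_mk, mul_assoc x y z]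
  simp only [mul_assoc, mul_comm, mul_left_comm, mul_inv_cancel_left]

theorem mulTwoCoboundaryHom_const (a : M) :
    mulTwoCoboundaryHom (fun _ : G => a) = fun _ _ => a := by
  ext
  simp [mulTwoCoboundaryHom]

theorem isMulTwoCoboundary_pow_iff_of_div_mem_range {α β : G → G → M}
    (h : α / β ∈ (mulTwoCoboundaryHom : (G → M) →* _).range) (j : ℕ) :
    IsMulTwoCoboundary (α ^ j) ↔ IsMulTwoCoboundary (β ^ j) := by
  rw [isMulTwoCoboundary_iff_mem_range, isMulTwoCoboundary_iff_mem_range,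
    ← div_mul_cancel α β, mul_pow]
  exact Subgroup.mul_mem_cancel_left _ (pow_mem h j)

theorem exists_normalized_pow_eq_one_of_isMulTwoCoboundary_pow {k : Type*} [Field k] [IsAlgClosed k]
    {α : G → G → kˣ} {m : ℕ} (hm : 0 < m) (h : IsMulTwoCoboundary (α ^ m)) :
    ∃ d : G → kˣ,
      (α / mulTwoCoboundaryHom d) ^ m = 1 ∧ (α / mulTwoCoboundaryHom d) 1 1 = 1 := by
  obtain ⟨c, hc⟩ := isMulTwoCoboundary_iff_mem_range.mp h
  have hroot (a : kˣ) : ∃ b : kˣ, b ^ m = a := by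
    obtain ⟨b, hb⟩ := IsAlgClosed.exists_pow_nat_eq (a : k) hm
    have hb0 : b ≠ 0 := by rintro rfl; exact a.ne_zero (by rw [← hb, zero_pow hm.ne'])
    exact ⟨Units.mk0 b hb0, Units.ext (by simpa using hb)⟩
  choose r hr using fun g => hroot (c g)
  set β := α / mulTwoCoboundaryHom r
  have hβ : β ^ m = 1 := by
    rw [div_pow, ← map_pow, show r ^ m = c from funext hr, hc, div_self']
  refine ⟨r * fun _ => β 1 1, ?_, ?_⟩
  · rw [map_mul, mulTwoCoboundaryHom_const, ← div_div, div_pow, hβ, one_div, inv_eq_one]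
    funext x y
    exact congr_fun₂ hβ 1 1
  · simp [map_mul, mulTwoCoboundaryHom_const, β]

theorem not_dvd_of_pow_eq_one_of_minimal {k : Type*} [Field k] (p : ℕ) [Fact p.Prime] [CharP k p]
    {β : G → G → kˣ} {m : ℕ} (hm : 0 < m) (hβ : β ^ m = 1)
    (hmin : ∀ j, 0 < j → IsMulTwoCoboundary (β ^ j) → m ∣ j) : ¬ p ∣ m := by
  rintro ⟨m', rfl⟩
  have hm' : 0 < m' := Nat.pos_of_mul_pos_left hm
  have hβ' : β ^ m' = 1 := by
    ext x y
    have := congrArg (fun γ => ((γ x y : kˣ) : k)) hβ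
    simp only [Pi.pow_apply, Units.val_pow_eq_pow_val, Pi.one_apply, Units.val_one] at this ⊢
    exact (ExpChar.pow_prime_pow_mul_eq_one_iff p 1 m' _).mp (by simpa using this)
  have hdvd := hmin m' hm' (isMulTwoCoboundary_iff_mem_range.mpr (hβ' ▸ one_mem _))
  have := Nat.le_of_dvd hm' hdvd
  nlinarith [(Fact.out : p.Prime).two_le]

end Cohomology

section Characters

variable {k : Type*} [Field k] [IsSepClosed k] (p : ℕ) [Fact p.Prime] [CharP k p]

/- The image of `x ↦ x ^ q`, with `q` the `p`-part of the exponent, has exponent prime to `p`,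
so `k` has enough roots of unity for it, and it still contains `a ^ q ≠ 1`. -/
theorem CommGroup.exists_monoidHom_apply_ne_one_of_coprime {A : Type*} [CommGroup A] [Finite A]
    {a : A} (ha : a ≠ 1) (hcop : (orderOf a).Coprime p) : ∃ φ : A →* kˣ, φ a ≠ 1 := by
  set n := Monoid.exponent A
  set q := p ^ n.factorization p
  set P : A →* A := powMonoidHom q
  have hexp : ¬ p ∣ Monoid.exponent P.range := by
    refine fun hdvd => Nat.not_dvd_ordCompl Fact.out (Monoid.exponent_ne_zero_of_finite (G := A))
      (hdvd.trans (Monoid.exponent_dvd_of_forall_pow_eq_one ?_))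
    rintro ⟨_, x, rfl⟩
    ext
    change (x ^ q) ^ _ = 1
    rw [← pow_mul, Nat.ordProj_mul_ordCompl_eq_self, Monoid.pow_exponent_eq_one]
  have : NeZero (Monoid.exponent P.range : k) :=
    ⟨fun h => hexp ((CharP.cast_eq_zero_iff k p _).mp h)⟩
  have haq : a ^ q ≠ 1 := fun h =>
    ha (orderOf_eq_one_iff.mp ((hcop.pow_right _).eq_one_of_dvd (orderOf_dvd_of_pow_eq_one h)))
  obtain ⟨φ, hφ⟩ := CommGroup.exists_apply_ne_one_of_hasEnoughRootsOfUnity P.range k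
    (a := P.rangeRestrict a) fun h => haq (congrArg Subtype.val h)
  exact ⟨φ.comp P.rangeRestrict, hφ⟩

theorem exists_monoidHom_apply_ne_one_of_notMem_commutator {E : Type*} [Group E] [Finite E]
    {z : E} (hz : z ∉ commutator E) (hcop : (orderOf z).Coprime p) :
    ∃ Φ : E →* kˣ, Φ z ≠ 1 := by
  have ha : Abelianization.of z ≠ 1 := fun h => hz ((QuotientGroup.eq_one_iff z).mp h)
  obtain ⟨φ, hφ⟩ := CommGroup.exists_monoidHom_apply_ne_one_of_coprime (k := k) p ha
    (hcop.coprime_dvd_left (orderOf_map_dvd _ z))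
  exact ⟨φ.comp Abelianization.of, hφ⟩

end Characters

section CharIdempotent

open MonoidAlgebra

variable {k E : Type*} [Field k] [Group E] (Z : Subgroup E) [Finite Z] (χ : Z →* kˣ)

noncomputable def charIdempotent : MonoidAlgebra k E :=
  (Nat.card Z : k)⁻¹ • ∑ᶠ z : Z, ((χ z⁻¹ : kˣ) : k) • of k E z

theorem map_charIdempotent {M : Type*} [AddCommGroup M] [Module k M]
    (hZ : (Nat.card Z : k) ≠ 0) (L : MonoidAlgebra k E →ₗ[k] M) (v : M)
    (hL : ∀ z : Z, L (of k E z) = ((χ z : kˣ) : k) • v) : L (charIdempotent Z χ) = v := by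
  have := Fintype.ofFinite Z
  rw [charIdempotent, finsum_eq_sum_of_fintype, map_smul, map_sum]
  simp_rw [map_smul, hL, smul_smul, ← Units.val_mul, ← map_mul, inv_mul_cancel, map_one,
    Units.val_one, one_smul, Finset.sum_const, Finset.card_univ, ← Nat.card_eq_fintype_card,
    ← Nat.cast_smul_eq_nsmul k, smul_smul, inv_mul_cancel₀ hZ, one_smul]

theorem charIdempotent_mul_of (z : Z) :
    charIdempotent Z χ * of k E z = ((χ z : kˣ) : k) • charIdempotent Z χ := by
  have := Fintype.ofFinite Z
  rw [charIdempotent, smul_mul_assoc, smul_comm ((χ z : kˣ) : k)]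
  congr 1
  rw [finsum_eq_sum_of_fintype, Finset.sum_mul, Finset.smul_sum]
  apply Fintype.sum_equiv (Equiv.mulRight z)
  intro w
  rw [smul_mul_assoc, ← map_mul, smul_smul, ← Units.val_mul, ← map_mul, Equiv.coe_mulRight,
    Subgroup.coe_mul]
  congr 4
  group

theorem charIdempotent_mul_self (hZ : (Nat.card Z : k) ≠ 0) :
    charIdempotent Z χ * charIdempotent Z χ = charIdempotent Z χ :=
  map_charIdempotent Z χ hZ (LinearMap.mulLeft k _) _ (charIdempotent_mul_of Z χ)

theorem commute_charIdempotent (hZ : Z ≤ Subgroup.center E) (x : MonoidAlgebra k E) :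
    Commute (charIdempotent Z χ) x := by
  have := Fintype.ofFinite Z
  rw [charIdempotent, finsum_eq_sum_of_fintype]
  refine Commute.smul_left (Commute.sum_left _ _ _ fun z _ => Commute.smul_left ?_ _) _
  rw [of_apply]
  exact single_commute (fun g => (Subgroup.mem_center_iff.mp (hZ z.2) g).symm) Commute.one_left x

end CharIdempotent

namespace Module.Basis

variable {ι R A B : Type*} [CommSemiring R] [Semiring A] [Algebra R A] [Semiring B] [Algebra R B]
  (u : Basis ι R A)

theorem eq_one_of_mul_apply {x : A} (h : ∀ i, x * u i = u i) : x = 1 := by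
  have hx : LinearMap.mulLeft R x = LinearMap.id := u.ext h
  simpa using LinearMap.congr_fun hx 1

theorem map_mul_of_map_mul_apply (f : A →ₗ[R] B)
    (h : ∀ i j, f (u i * u j) = f (u i) * f (u j)) (a b : A) : f (a * b) = f a * f b :=
  LinearMap.congr_fun₂ (LinearMap.ext_basis u u (B := (LinearMap.mul R A).compr₂ f)
    (B' := (LinearMap.mul R B).compl₁₂ f f) h) a b

theorem unitsSMul_inv_mul_unitsSMul_inv {G R A : Type*} [Group G] [CommRing R] [Ring A]
    [Algebra R A] (u : Basis G R A) {α : G → G → Rˣ}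
    (hmul : ∀ g h, u g * u h = (α g h : R) • u (g * h)) (d : G → Rˣ) (g h : G) :
    u.unitsSMul d⁻¹ g * u.unitsSMul d⁻¹ h =
      ((α / mulTwoCoboundaryHom d) g h : R) • u.unitsSMul d⁻¹ (g * h) := by
  simp only [Module.Basis.unitsSMul_apply, Units.smul_def, smul_mul_smul_comm, hmul, smul_smul]
  simp only [← Units.val_mul]
  congr 1
  simp only [mulTwoCoboundaryHom, Pi.div_apply, MonoidHom.coe_mk, OneHom.coe_mk, div_eq_mul_inv,
    mul_inv, inv_inv, Units.val_mul, Pi.inv_apply]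
  linear_combination -(↑(α g h) * ↑(d g)⁻¹ * ↑(d h)⁻¹ : R) * Units.mul_inv (d (g * h))

end Module.Basis

structure NormalizedMulTwoCocycle (G K : Type*) [Group G] [CommGroup K] where
  toFun : G → G → K
  isMulTwoCocycle : IsMulTwoCocycle toFun
  apply_one_one : toFun 1 1 = 1

namespace NormalizedMulTwoCocycle

universe uG uK

variable {G : Type uG} {K : Type uK} [Group G] [CommGroup K]

instance : CoeFun (NormalizedMulTwoCocycle G K) fun _ => G → G → K := ⟨toFun⟩

@[ext]
structure Extension (c : NormalizedMulTwoCocycle G K) where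
  base : G
  fiber : K

variable (c : NormalizedMulTwoCocycle G K)

theorem apply_one_left (g : G) : c 1 g = 1 :=
  (c.isMulTwoCocycle.apply_one_left g).trans c.apply_one_one

theorem apply_one_right (g : G) : c g 1 = 1 :=
  (c.isMulTwoCocycle.apply_one_right g).trans c.apply_one_one

namespace Extension

variable {c}

instance : Mul c.Extension :=
  ⟨fun x y => ⟨x.base * y.base, c x.base y.base * x.fiber * y.fiber⟩⟩
instance : One c.Extension := ⟨⟨1, 1⟩⟩
instance : Inv c.Extension :=
  ⟨fun x => ⟨x.base⁻¹, (c x.base⁻¹ x.base * x.fiber)⁻¹⟩⟩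

theorem mul_def (x y : c.Extension) :
    x * y = ⟨x.base * y.base, c x.base y.base * x.fiber * y.fiber⟩ := rfl

theorem one_def : (1 : c.Extension) = ⟨1, 1⟩ := rfl

instance : Group c.Extension :=
  Group.ofLeftAxioms
    (fun x y z => by
      ext
      · exact mul_assoc _ _ _
      · have h := c.isMulTwoCocycle x.base y.base z.base
        simp only [mul_def]
        calc c (x.base * y.base) z.base * (c x.base y.base * x.fiber * y.fiber) * z.fiber
            = (c x.base y.base * c (x.base * y.base) z.base) * (x.fiber * y.fiber * z.fiber) := by
              simp only [mul_assoc, mul_comm, mul_left_comm]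
          _ = c x.base (y.base * z.base) * x.fiber * (c y.base z.base * y.fiber * z.fiber) := by
              rw [h]; simp only [mul_assoc, mul_comm, mul_left_comm])
    (fun x => by simp [mul_def, one_def, c.apply_one_left])
    (fun x => by
      ext
      · exact inv_mul_cancel x.base
      · show c x.base⁻¹ x.base * (c x.base⁻¹ x.base * x.fiber)⁻¹ * x.fiber = 1
        simp [mul_comm, mul_left_comm])

instance [Finite G] [Finite K] : Finite c.Extension :=
  Finite.of_injective (fun x => (x.base, x.fiber)) fun x y h => by
    cases x; cases y; cases h; rfl

def proj : c.Extension →* G where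
  toFun := base
  map_one' := rfl
  map_mul' _ _ := rfl

def incl : K →* c.Extension where
  toFun t := ⟨1, t⟩
  map_one' := rfl
  map_mul' s t := by simp [mul_def, c.apply_one_one]

def ofBase (g : G) : c.Extension := ⟨g, 1⟩

theorem proj_surjective : Function.Surjective (proj : c.Extension →* G) :=
  fun g => ⟨ofBase g, rfl⟩

theorem incl_injective : Function.Injective (incl : K →* c.Extension) :=
  fun _ _ h => congrArg fiber h

theorem incl_mem_ker_proj (t : K) : (incl t : c.Extension) ∈ proj.ker := rfl

theorem incl_fiber_of_mem_ker_proj {x : c.Extension} (hx : x ∈ proj.ker) : incl x.fiber = x := by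
  ext
  exacts [hx.symm, rfl]

theorem incl_mul (t : K) (x : c.Extension) : incl t * x = ⟨x.base, t * x.fiber⟩ := by
  simp [mul_def, incl, c.apply_one_left]

theorem incl_fiber_mul_ofBase (x : c.Extension) : incl x.fiber * ofBase x.base = x := by
  rw [incl_mul]
  simp [ofBase]

theorem ofBase_one : (ofBase 1 : c.Extension) = 1 := rfl

theorem ofBase_mul_ofBase (g h : G) :
    (ofBase g * ofBase h : c.Extension) = incl (c g h) * ofBase (g * h) := by
  rw [incl_mul]
  simp [ofBase, mul_def]

theorem ker_proj_le_center : (proj : c.Extension →* G).ker ≤ Subgroup.center c.Extension := by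
  intro z hz
  rw [Subgroup.mem_center_iff]
  intro x
  rw [← incl_fiber_of_mem_ker_proj hz, incl_mul]
  simp [mul_def, incl, c.apply_one_right, mul_comm]

def kerProjEquiv : (proj : c.Extension →* G).ker ≃* K where
  toFun z := z.1.fiber
  invFun t := ⟨incl t, incl_mem_ker_proj t⟩
  left_inv z := Subtype.ext (incl_fiber_of_mem_ker_proj z.2)
  right_inv _ := rfl
  map_mul' z w := by
    change ((z : c.Extension) * w).fiber = _
    rw [← incl_fiber_of_mem_ker_proj z.2, incl_mul]
    rfl

instance [Finite K] : Finite (proj : c.Extension →* G).ker :=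
  Finite.of_equiv K kerProjEquiv.symm.toEquiv

theorem natCard_ker_proj : Nat.card (proj : c.Extension →* G).ker = Nat.card K :=
  Nat.card_congr kerProjEquiv.toEquiv

def kerChar {M : Type*} [Monoid M] (χ : K →* M) : (proj : c.Extension →* G).ker →* M :=
  χ.comp kerProjEquiv.toMonoidHom

theorem kerChar_apply {M : Type*} [Monoid M] (χ : K →* M) (z : (proj : c.Extension →* G).ker) :
    kerChar χ z = χ z.1.fiber := rfl

theorem isMulTwoCoboundary_comp_incl {M : Type*} [CommGroup M] (Φ : c.Extension →* M) :
    IsMulTwoCoboundary fun x y => Φ (incl (c x y)) :=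
  ⟨fun g => Φ (ofBase g), fun x y => by
    rw [← map_mul, ofBase_mul_ofBase, map_mul, mul_inv_cancel_right]⟩

theorem ker_proj_le_commutator [Finite G] [Finite K] {k : Type*} [Field k] [IsSepClosed k]
    (p : ℕ) [Fact p.Prime] [CharP k p] (hK : (Nat.card K).Coprime p)
    (h : ∀ ψ : K →* kˣ, IsMulTwoCoboundary (fun x y => ψ (c x y)) → ψ = 1) :
    (proj : c.Extension →* G).ker ≤ commutator c.Extension := by
  intro z hz
  by_contra hzc
  rw [← incl_fiber_of_mem_ker_proj hz] at hzc
  have hcop : (orderOf (incl z.fiber : c.Extension)).Coprime p := by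
    rw [orderOf_injective incl incl_injective]
    exact hK.coprime_dvd_left (orderOf_dvd_natCard _)
  obtain ⟨Φ, hΦ⟩ := exists_monoidHom_apply_ne_one_of_notMem_commutator (k := k) p hzc hcop
  exact hΦ (DFunLike.congr_fun (h (Φ.comp incl) (isMulTwoCoboundary_comp_incl Φ)) z.fiber)

end Extension

open Extension MonoidAlgebra

variable {k A : Type*} [Field k] [Ring A] [Algebra k A] (χ : K →* kˣ) (u : Module.Basis G k A)

noncomputable def idempotent : MonoidAlgebra k c.Extension :=
  charIdempotent proj.ker (kerChar χ)

noncomputable def toExtensionAlgebra : A →ₗ[k] MonoidAlgebra k c.Extension :=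
  u.constr k fun g => c.idempotent χ * of k _ (ofBase g)

noncomputable def ofExtensionAlgebra : MonoidAlgebra k c.Extension →ₗ[k] A :=
  (MonoidAlgebra.basis c.Extension k).constr k fun x => (χ x.fiber : k) • u x.base

theorem toExtensionAlgebra_basis (g : G) :
    c.toExtensionAlgebra χ u (u g) = c.idempotent χ * of k _ (ofBase g) :=
  u.constr_basis k _ g

theorem ofExtensionAlgebra_of (x : c.Extension) :
    c.ofExtensionAlgebra χ u (of k _ x) = (χ x.fiber : k) • u x.base := by
  rw [of_apply, ← basis_apply]
  exact (MonoidAlgebra.basis c.Extension k).constr_basis k _ x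

variable {c χ}

theorem toExtensionAlgebra_one (hmul : ∀ g h : G, u g * u h = (χ (c g h) : k) • u (g * h)) :
    c.toExtensionAlgebra χ u 1 = c.idempotent χ := by
  have hu : u 1 = 1 := u.eq_one_of_mul_apply fun g => by
    rw [hmul, c.apply_one_left, map_one, Units.val_one, one_smul, one_mul]
  rw [← hu, toExtensionAlgebra_basis, ofBase_one, map_one, mul_one]

variable [Finite K]

theorem idempotent_mul_of_incl (t : K) :
    c.idempotent χ * of k _ (incl t) = (χ t : k) • c.idempotent χ :=
  charIdempotent_mul_of _ _ ⟨incl t, incl_mem_ker_proj t⟩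

theorem idempotent_mul_self (hK : (Nat.card K : k) ≠ 0) :
    c.idempotent χ * c.idempotent χ = c.idempotent χ :=
  charIdempotent_mul_self _ _ (natCard_ker_proj (c := c) ▸ hK)

theorem commute_idempotent (x : MonoidAlgebra k c.Extension) : Commute (c.idempotent χ) x :=
  commute_charIdempotent _ _ ker_proj_le_center x

theorem ofExtensionAlgebra_comp_toExtensionAlgebra (hK : (Nat.card K : k) ≠ 0) :
    (c.ofExtensionAlgebra χ u).comp (c.toExtensionAlgebra χ u) = LinearMap.id := by
  refine u.ext fun g => ?_
  rw [LinearMap.comp_apply, toExtensionAlgebra_basis, LinearMap.id_apply]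
  refine map_charIdempotent _ _ (natCard_ker_proj (c := c) ▸ hK)
    ((c.ofExtensionAlgebra χ u).comp (LinearMap.mulRight k (of k _ (ofBase g)))) (u g) fun z => ?_
  rw [LinearMap.comp_apply, LinearMap.mulRight_apply, ← map_mul,
    ← incl_fiber_of_mem_ker_proj z.2, incl_mul, ofExtensionAlgebra_of]
  simp [ofBase, kerChar_apply]

theorem toExtensionAlgebra_comp_ofExtensionAlgebra :
    (c.toExtensionAlgebra χ u).comp (c.ofExtensionAlgebra χ u) =
      LinearMap.mulLeft k (c.idempotent χ) := by
  refine (MonoidAlgebra.basis c.Extension k).ext fun x => ?_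
  rw [basis_apply, ← of_apply, LinearMap.comp_apply, ofExtensionAlgebra_of, map_smul,
    toExtensionAlgebra_basis, LinearMap.mulLeft_apply]
  conv_rhs => rw [← incl_fiber_mul_ofBase x, map_mul, ← mul_assoc, idempotent_mul_of_incl,
    smul_mul_assoc]

theorem toExtensionAlgebra_mul (hK : (Nat.card K : k) ≠ 0)
    (hmul : ∀ g h : G, u g * u h = (χ (c g h) : k) • u (g * h)) (a b : A) :
    c.toExtensionAlgebra χ u (a * b) =
      c.toExtensionAlgebra χ u a * c.toExtensionAlgebra χ u b := by
  refine u.map_mul_of_map_mul_apply _ (fun g h => ?_) a b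
  rw [hmul, map_smul, toExtensionAlgebra_basis, toExtensionAlgebra_basis, toExtensionAlgebra_basis,
    mul_assoc, ← mul_assoc (of k _ _), ← (commute_idempotent _).eq, mul_assoc, ← mul_assoc,
    idempotent_mul_self hK, ← map_mul, ofBase_mul_ofBase, map_mul, ← mul_assoc,
    idempotent_mul_of_incl, smul_mul_assoc]

theorem toExtensionAlgebra_injective (hK : (Nat.card K : k) ≠ 0) :
    Function.Injective (c.toExtensionAlgebra χ u) :=
  Function.LeftInverse.injective (g := c.ofExtensionAlgebra χ u)
    (LinearMap.congr_fun (ofExtensionAlgebra_comp_toExtensionAlgebra u hK))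

theorem range_toExtensionAlgebra (hK : (Nat.card K : k) ≠ 0) :
    Set.range (c.toExtensionAlgebra χ u) = {x | c.idempotent χ * x = x} := by
  have hfT := LinearMap.congr_fun (toExtensionAlgebra_comp_ofExtensionAlgebra (c := c) (χ := χ) u)
  ext x
  constructor
  · rintro ⟨a, rfl⟩
    have := hfT (c.toExtensionAlgebra χ u a)
    rwa [LinearMap.comp_apply, ← LinearMap.comp_apply (c.ofExtensionAlgebra χ u),
      ofExtensionAlgebra_comp_toExtensionAlgebra u hK, LinearMap.id_apply, eq_comm] at this
  · intro hx
    exact ⟨c.ofExtensionAlgebra χ u x,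
      by rw [← LinearMap.comp_apply, hfT, LinearMap.mulLeft_apply, hx]⟩

theorem nonempty_kulshammerData [Finite G] [IsCyclic K] [IsSepClosed k] (p : ℕ) [Fact p.Prime]
    [CharP k p] (hχ : Function.Injective χ) (hK : (Nat.card K).Coprime p)
    (hc : ∀ ψ : K →* kˣ, IsMulTwoCoboundary (fun x y => ψ (c x y)) → ψ = 1)
    (hmul : ∀ g h : G, u g * u h = (χ (c g h) : k) • u (g * h)) :
    Nonempty (KulshammerData.{_, _, _, max uG uK} k G (Nat.card K) A) := by
  have hK' : (Nat.card K : k) ≠ 0 := fun h =>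
    (Nat.Prime.coprime_iff_not_dvd Fact.out).mp (Nat.coprime_comm.mp hK)
      ((CharP.cast_eq_zero_iff k p _).mp h)
  exact ⟨{ Gt := c.Extension
           ρ := proj
           surj := proj_surjective
           central := ker_proj_le_center
           cyclic := isCyclic_of_surjective _ kerProjEquiv.symm.surjective
           card_ker := natCard_ker_proj
           ker_le_commutator := ker_proj_le_commutator p hK hc
           χ := kerChar χ
           χ_inj := hχ.comp kerProjEquiv.injective
           e := c.idempotent χ
           he := rfl
           he_idem := idempotent_mul_self hK'
           he_central x := (commute_idempotent x).eq
           iso := ⟨c.toExtensionAlgebra χ u, toExtensionAlgebra_injective u hK',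
             toExtensionAlgebra_mul u hK' hmul, toExtensionAlgebra_one u hmul,
             range_toExtensionAlgebra u hK'⟩ }⟩

end NormalizedMulTwoCocycle

section RootsOfUnity

universe u

variable {G R : Type*} [Group G] [CommRing R] {m : ℕ}

instance ULift.isCyclic {H : Type*} [Group H] [IsCyclic H] : IsCyclic (ULift.{u} H) :=
  isCyclic_of_surjective _ (MulEquiv.ulift.symm : H ≃* ULift H).surjective

def rootsOfUnity.uliftVal : ULift.{u} (rootsOfUnity m R) →* Rˣ :=
  (rootsOfUnity m R).subtype.comp MulEquiv.ulift.toMonoidHom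

theorem rootsOfUnity.uliftVal_injective :
    Function.Injective (rootsOfUnity.uliftVal.{u} : ULift (rootsOfUnity m R) →* Rˣ) :=
  Subtype.val_injective.comp MulEquiv.ulift.injective

/-- The `ULift` lets the extension defined by this cocycle live in any universe, as
`KulshammerData` requires. -/
def NormalizedMulTwoCocycle.ofPowEqOne {β : G → G → Rˣ} (hβ : IsMulTwoCocycle β)
    (hβm : β ^ m = 1) (hβ1 : β 1 1 = 1) :
    NormalizedMulTwoCocycle G (ULift.{u} (rootsOfUnity m R)) where
  toFun x y := ⟨⟨β x y, (mem_rootsOfUnity _ _).mpr (congr_fun₂ hβm x y)⟩⟩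
  isMulTwoCocycle x y z := ULift.ext _ _ (Subtype.ext (hβ x y z))
  apply_one_one := ULift.ext _ _ (Subtype.ext hβ1)

theorem rootsOfUnity.exists_eq_pow_of_monoidHom [IsDomain R] [NeZero m]
    (ψ : rootsOfUnity m R →* Rˣ) : ∃ j : ℕ, ∀ t, ψ t = (t : Rˣ) ^ j := by
  have hψ (t : rootsOfUnity m R) : ψ t ∈ rootsOfUnity m R := by
    rw [mem_rootsOfUnity, ← map_pow, show t ^ m = 1 from Subtype.ext t.2, map_one]
  obtain ⟨j, hj⟩ := (ψ.codRestrict _ hψ).map_cyclic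
  obtain ⟨n, hn⟩ := Int.eq_ofNat_of_zero_le
    (Int.emod_nonneg j (Int.natCast_ne_zero.mpr (Nat.card_pos (α := rootsOfUnity m R)).ne'))
  refine ⟨n, fun t => ?_⟩
  rw [show ψ t = ((t ^ j : rootsOfUnity m R) : Rˣ) from congrArg Subtype.val (hj t),
    ← zpow_mod_natCard, hn, zpow_natCast, Subgroup.coe_pow]

theorem NormalizedMulTwoCocycle.eq_one_of_isMulTwoCoboundary_ofPowEqOne [IsDomain R] [NeZero m]
    {β : G → G → Rˣ} (hβ : IsMulTwoCocycle β) (hβm : β ^ m = 1) (hβ1 : β 1 1 = 1)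
    (hmin : ∀ j, 0 < j → IsMulTwoCoboundary (β ^ j) → m ∣ j)
    (ψ : ULift.{u} (rootsOfUnity m R) →* Rˣ)
    (hψ : IsMulTwoCoboundary fun x y => ψ (ofPowEqOne hβ hβm hβ1 x y)) : ψ = 1 := by
  obtain ⟨j, hj⟩ :=
    rootsOfUnity.exists_eq_pow_of_monoidHom (ψ.comp MulEquiv.ulift.symm.toMonoidHom)
  replace hj (t : ULift (rootsOfUnity m R)) : ψ t = (t.down : Rˣ) ^ j := hj t.down
  obtain rfl | hj0 := j.eq_zero_or_pos
  · ext t; simp [hj]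
  simp only [hj] at hψ
  obtain ⟨i, rfl⟩ := hmin j hj0 hψ
  ext t
  simp [hj, pow_mul, (mem_rootsOfUnity _ _).mp t.down.2]

end RootsOfUnity

open NormalizedMulTwoCocycle in
/-- Let `G` be a finite group, `k` an algebraically closed field of
characteristic `p > 0`, and `α : G × G → kˣ` a 2-cocycle whose cohomology class has order
`m`. Then there is a finite central extension `G̃` of `G` by a cyclic group `Z` of order
`m` contained in `[G̃, G̃]`, together with an injective character `χ : Z → kˣ`, such that
the twisted group algebra `k_α G` (presented as a `k`-algebra `A` with basis `(u_g)` and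
`u_g * u_h = α(g,h) • u_{gh}`) is isomorphic as a `k`-algebra to `k G̃ e`, where
`e = |Z|⁻¹ Σ_{z ∈ Z} χ(z⁻¹) z` is a central idempotent of `k G̃`. -/
theorem twisted_group_algebra_as_corner_of_central_extension
    (p : ℕ) [Fact p.Prime] (k : Type) [Field k] [IsAlgClosed k] [CharP k p]
    (G : Type) [Group G] [Finite G]
    (α : G → G → kˣ) (hα : IsMulTwoCocycle α)
    (m : ℕ) (hm : 0 < m)
    (hord : IsMulTwoCoboundary (fun x y => α x y ^ m))
    (hmin : ∀ j : ℕ, 0 < j → IsMulTwoCoboundary (fun x y => α x y ^ j) → m ∣ j)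
    (A : Type) [Ring A] [Algebra k A]
    (u : Module.Basis G k A)
    (hmul : ∀ g h : G, u g * u h = (α g h : k) • u (g * h)) :
    Nonempty (KulshammerData k G m A) := by
  obtain ⟨d, hβm, hβ1⟩ := exists_normalized_pow_eq_one_of_isMulTwoCoboundary_pow hm hord
  set β := α / mulTwoCoboundaryHom d
  have hβ : IsMulTwoCocycle β :=
    (mulTwoCocycles G kˣ).div_mem hα (mulTwoCoboundaryHom_range_le ⟨d, rfl⟩)
  have hβmin (j : ℕ) (hj : 0 < j) (h : IsMulTwoCoboundary (β ^ j)) : m ∣ j :=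
    hmin j hj ((isMulTwoCoboundary_pow_iff_of_div_mem_range (by simp [β]) j).mpr h)
  have hpm : ¬ p ∣ m := not_dvd_of_pow_eq_one_of_minimal p hm hβm hβmin
  have : NeZero m := ⟨hm.ne'⟩
  have : NeZero (m : k) := ⟨fun h => hpm ((CharP.cast_eq_zero_iff k p m).mp h)⟩
  have hcard : Nat.card (ULift (rootsOfUnity m k)) = m := by
    rw [Nat.card_ulift]
    exact (HasEnoughRootsOfUnity.exists_primitiveRoot k m).choose_spec.card_rootsOfUnity
  have hcop : (Nat.card (ULift (rootsOfUnity m k))).Coprime p := by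
    rw [hcard, Nat.coprime_comm]
    exact (Nat.Prime.coprime_iff_not_dvd Fact.out).mpr hpm
  have := (ofPowEqOne hβ hβm hβ1).nonempty_kulshammerData (χ := rootsOfUnity.uliftVal)
    (u.unitsSMul d⁻¹) p rootsOfUnity.uliftVal_injective hcop
    (eq_one_of_isMulTwoCoboundary_ofPowEqOne hβ hβm hβ1 hβmin)
    (u.unitsSMul_inv_mul_unitsSMul_inv hmul d)
  rwa [hcard] at this
end
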